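/- Let A be a Banach *-algebra with proper involution, and let a ∈ A be a partial isometry (a* = a†, i.e., a = aa*a and a* is a Moore–Penrose inverse of a). Then a has a generalized right core-EP inverse if and only if a is generalized right group invertible. -/

import Mathlib

open Filter Topology

/-- `x` is a generalized right group inverse of `a`. -/
def IsGRGInv {A : Type*} [NormedRing A] [StarRing A] (a x : A) : Prop :=
  a * x ^ 2 = x ∧ star (star a * a ^ 2 * x) = star a * a ^ 2 * x ∧
    Tendsto (fun n : ℕ => ‖a ^ n - a * x * a ^ n‖ ^ (1 / (n : ℝ))) atTop (𝓝 0)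

/-- `x` is a generalized right core-EP inverse of `a`. -/
def IsGRCEPInv {A : Type*} [NormedRing A] [StarRing A] (a x : A) : Prop :=
  a * x ^ 2 = x ∧ star (a * x) = a * x ∧
    Tendsto (fun n : ℕ => ‖a ^ n - a * x * a ^ n‖ ^ (1 / (n : ℝ))) atTop (𝓝 0)

/-!
For either kind of inverse `x`, the super-geometric decay of `aⁿ - (a x) aⁿ` forces `q = a x` to
be an idempotent with `q a q = a q`. Any `f` with `q f = f` and `f q = q` then yields the candidate
`x f`, which satisfies `a (x f) = f` and inherits the decay. For a core-EP inverse take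
`f = q + x a (1 - q)`: then `a f = q a`, so `a* a² (x f) = a* q a` is self-adjoint because `q` is.
For a group inverse of a partial isometry take `f = a q a*`, which is self-adjoint because
`a* a q` is.
-/

lemma tendsto_mul_pow_of_tendsto_rpow_one_div {u : ℕ → ℝ} (hu0 : ∀ n, 0 ≤ u n)
    (hu : Tendsto (fun n : ℕ => u n ^ (1 / (n : ℝ))) atTop (𝓝 0)) (K : ℝ) :
    Tendsto (fun n : ℕ => u n * K ^ n) atTop (𝓝 0) := by
  set M := |K| + 1
  have hM : 0 < M := by positivity
  have hroot : ∀ᶠ n : ℕ in atTop, u n ^ (1 / (n : ℝ)) < (2 * M)⁻¹ :=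
    hu.eventually (gt_mem_nhds (by positivity))
  refine squeeze_zero_norm' ?_ (tendsto_pow_atTop_nhds_zero_of_lt_one (r := (1 / 2 : ℝ))
    (by norm_num) (by norm_num))
  filter_upwards [hroot, eventually_ne_atTop 0] with n hn hn0
  have hun : u n ≤ (2 * M)⁻¹ ^ n := by
    rw [one_div] at hn
    calc u n = (u n ^ ((n : ℝ)⁻¹)) ^ n := (Real.rpow_inv_natCast_pow (hu0 n) hn0).symm
      _ ≤ (2 * M)⁻¹ ^ n := pow_le_pow_left₀ (Real.rpow_nonneg (hu0 n) _) hn.le n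
  calc ‖u n * K ^ n‖ = u n * |K| ^ n := by
        rw [norm_mul, norm_pow, Real.norm_of_nonneg (hu0 n), Real.norm_eq_abs]
    _ ≤ (2 * M)⁻¹ ^ n * M ^ n := by
        gcongr
        exact le_add_of_nonneg_right zero_le_one
    _ = (1 / 2) ^ n := by rw [← mul_pow]; field_simp

lemma tendsto_rpow_one_div_of_le_mul {u v : ℕ → ℝ} {C : ℝ} (hC : 0 < C) (hu0 : ∀ n, 0 ≤ u n)
    (hv0 : ∀ n, 0 ≤ v n) (hvu : ∀ n, v n ≤ C * u n)
    (hu : Tendsto (fun n : ℕ => u n ^ (1 / (n : ℝ))) atTop (𝓝 0)) :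
    Tendsto (fun n : ℕ => v n ^ (1 / (n : ℝ))) atTop (𝓝 0) := by
  have hCroot : Tendsto (fun n : ℕ => C ^ (1 / (n : ℝ))) atTop (𝓝 1) := by
    have := (Real.continuousAt_const_rpow hC.ne').tendsto.comp tendsto_one_div_atTop_nhds_zero_nat
    rwa [Real.rpow_zero] at this
  refine squeeze_zero (g := fun n : ℕ => C ^ (1 / (n : ℝ)) * u n ^ (1 / (n : ℝ)))
    (fun n => Real.rpow_nonneg (hv0 n) _) (fun n => ?_) (by simpa using hCroot.mul hu)
  rw [← Real.mul_rpow hC.le (hu0 n)]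
  exact Real.rpow_le_rpow (hv0 n) (hvu n) (by positivity)

section Ring

variable {A : Type*} [Ring A] {a x : A}

lemma pow_succ_mul_pow_succ_of_mul_sq (hx : a * x ^ 2 = x) (n : ℕ) :
    a ^ (n + 1) * x ^ (n + 1) = a * x := by
  induction n with
  | zero => simp
  | succ n ih =>
    calc a ^ (n + 2) * x ^ (n + 2) = a ^ (n + 1) * (a * x ^ 2 * x ^ n) := by
          rw [pow_succ a (n + 1), show x ^ (n + 2) = x ^ 2 * x ^ n by rw [← pow_add, add_comm]]
          simp only [mul_assoc]
      _ = a * x := by rw [hx, ← pow_succ', ih]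

end Ring

section NormedRing

variable {A : Type*} [NormedRing A] {a x : A}

lemma mul_pow_mul_eq_pow_mul_of_tendsto (hx : a * x ^ 2 = x)
    (hlim : Tendsto (fun n : ℕ => ‖a ^ n - a * x * a ^ n‖ ^ (1 / (n : ℝ))) atTop (𝓝 0))
    (k : ℕ) : a * x * (a ^ k * (a * x)) = a ^ k * (a * x) := by
  have hdefect : ∀ n : ℕ, a ^ k * (a * x) - a * x * (a ^ k * (a * x)) =
      (a ^ (n + (k + 1)) - a * x * a ^ (n + (k + 1))) * x ^ (n + 1) := by
    intro n
    have hk : a ^ k * (a * x) = a ^ (n + (k + 1)) * x ^ (n + 1) := by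
      rw [← pow_succ_mul_pow_succ_of_mul_sq hx n, ← mul_assoc, ← pow_add,
        show k + (n + 1) = n + (k + 1) by omega]
    rw [hk, sub_mul, mul_assoc (a * x)]
  set q := a * x
  set K := 1 + ‖x‖
  have hbound : ∀ n : ℕ, ‖a ^ k * q - q * (a ^ k * q)‖ ≤
      ‖a ^ (n + (k + 1)) - q * a ^ (n + (k + 1))‖ * K ^ (n + (k + 1)) := by
    intro n
    rw [hdefect n]
    refine (norm_mul_le _ _).trans (mul_le_mul_of_nonneg_left ?_ (norm_nonneg _))
    calc ‖x ^ (n + 1)‖ ≤ ‖x‖ ^ (n + 1) := norm_pow_le' x n.succ_pos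
      _ ≤ K ^ (n + 1) := pow_le_pow_left₀ (norm_nonneg _) (by simp [K]) _
      _ ≤ K ^ (n + (k + 1)) := pow_le_pow_right₀ (by simp [K]) (by omega)
  have hsmall := (tendsto_mul_pow_of_tendsto_rpow_one_div (fun _ => norm_nonneg _) hlim K).comp
    (tendsto_add_atTop_nat (k + 1))
  have hnorm := ge_of_tendsto hsmall (Eventually.of_forall hbound)
  exact (sub_eq_zero.mp (norm_le_zero_iff.mp hnorm)).symm

lemma mul_sq_eq_and_tendsto_of_mul_eq (hx : a * x ^ 2 = x)
    (hlim : Tendsto (fun n : ℕ => ‖a ^ n - a * x * a ^ n‖ ^ (1 / (n : ℝ))) atTop (𝓝 0))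
    {f : A} (hqf : a * x * f = f) (hfq : f * (a * x) = a * x) :
    a * (x * f) ^ 2 = x * f ∧
      Tendsto (fun n : ℕ => ‖a ^ n - a * (x * f) * a ^ n‖ ^ (1 / (n : ℝ))) atTop (𝓝 0) := by
  have hqx : a * x * x = x := by rw [mul_assoc, ← pow_two, hx]
  have hay : a * (x * f) = f := by rw [← mul_assoc, hqf]
  have hfx : f * x = x := by rw [← hqx, ← mul_assoc, hfq]
  refine ⟨by rw [pow_two, ← mul_assoc, hay, ← mul_assoc, hfx], ?_⟩
  refine tendsto_rpow_one_div_of_le_mul (C := 1 + ‖f‖) (by positivity) (fun _ => norm_nonneg _)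
    (fun _ => norm_nonneg _) (fun n => ?_) hlim
  have hsplit : a ^ n - a * (x * f) * a ^ n =
      (a ^ n - a * x * a ^ n) - f * (a ^ n - a * x * a ^ n) := by
    rw [hay, mul_sub f, ← mul_assoc f, hfq]; abel
  rw [hsplit]
  calc _ ≤ ‖a ^ n - a * x * a ^ n‖ + ‖f‖ * ‖a ^ n - a * x * a ^ n‖ :=
        (norm_sub_le _ _).trans (add_le_add le_rfl (norm_mul_le _ _))
    _ = (1 + ‖f‖) * ‖a ^ n - a * x * a ^ n‖ := by ring

variable [StarRing A]

theorem IsGRCEPInv.isGRGInv (h : IsGRCEPInv a x) :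
    IsGRGInv a (x * (a * x + x * a * (1 - a * x))) := by
  obtain ⟨hx, hsa, hlim⟩ := h
  have hqq : a * x * (a * x) = a * x := by
    simpa using mul_pow_mul_eq_pow_mul_of_tendsto hx hlim 0
  have hqaq : a * x * (a * (a * x)) = a * (a * x) := by
    simpa using mul_pow_mul_eq_pow_mul_of_tendsto hx hlim 1
  have hqx : a * x * x = x := by rw [mul_assoc, ← pow_two, hx]
  set q := a * x
  set f := q + x * a * (1 - q)
  have hqf : q * f = f := by
    calc q * f = q * q + q * x * a * (1 - q) := by simp only [f, mul_add, mul_assoc]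
      _ = f := by rw [hqq, hqx]
  have hfq : f * q = q := by
    calc f * q = q * q + x * a * (q - q * q) := by
          simp only [f, add_mul, sub_mul, mul_assoc, one_mul]
      _ = q := by rw [hqq, sub_self, mul_zero, add_zero]
  have haf : a * f = q * a := by
    calc a * f = a * q + q * a - q * (a * q) := by
          simp only [f, q, mul_add, mul_sub, mul_one, mul_assoc]; abel
      _ = q * a := by rw [hqaq]; abel
  obtain ⟨hsquare, hsmall⟩ := mul_sq_eq_and_tendsto_of_mul_eq hx hlim hqf hfq
  refine ⟨hsquare, ?_, hsmall⟩
  have hred : star a * a ^ 2 * (x * f) = star a * (q * a) := by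
    rw [← haf, pow_two, mul_assoc, mul_assoc a, ← mul_assoc a x, hqf]
  rw [hred, star_mul, star_mul, star_star, hsa, mul_assoc]

theorem IsGRGInv.isGRCEPInv_of_partialIsometry (hpi1 : a * star a * a = a)
    (hpi2 : star a * a * star a = star a) (h : IsGRGInv a x) :
    IsGRCEPInv a (x * (a * (a * x) * star a)) := by
  obtain ⟨hx, hsa, hlim⟩ := h
  have hqaq : a * x * (a * (a * x)) = a * (a * x) := by
    simpa using mul_pow_mul_eq_pow_mul_of_tendsto hx hlim 1
  have hqx : a * x * x = x := by rw [mul_assoc, ← pow_two, hx]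
  have hpq : star (a * x) * (star a * a) = star a * a * (a * x) := by
    rw [show star a * a ^ 2 * x = star a * a * (a * x) by simp only [pow_two, mul_assoc]] at hsa
    simpa only [star_mul, star_star, mul_assoc] using hsa
  set q := a * x
  have hsq : star q * star a * q = star a * q := by
    calc star q * star a * q = star q * (star a * a) * x := by simp only [q, mul_assoc]
      _ = star a * q := by rw [hpq, mul_assoc _ q x, hqx, mul_assoc]
  set E := a * q * star a
  have hqE : q * E = E := by rw [← mul_assoc, hqaq]
  have hEq : E * q = q := by
    calc E * q = a * q * (star a * q) := mul_assoc _ _ _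
      _ = a * (star a * a) * q * (star a * q) := by rw [← mul_assoc a (star a) a, hpi1]
      _ = a * (star a * a * q) * (star a * q) := by rw [mul_assoc a (star a * a) q]
      _ = a * (star q * (star a * a)) * (star a * q) := by rw [hpq]
      _ = a * (star q * (star a * a * star a) * q) := by simp only [mul_assoc]
      _ = a * (star q * star a * q) := by rw [hpi2]
      _ = a * (star a * (a * x)) := by rw [hsq]
      _ = q := by rw [← mul_assoc, ← mul_assoc, hpi1]
  have hEself : star E = E := by
    calc star E = a * star q * star a := by simp only [E, star_mul, star_star, mul_assoc]
      _ = a * (star q * (star a * a * star a)) := by rw [hpi2, ← mul_assoc]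
      _ = a * (star a * a * q) * star a := by rw [← hpq]; simp only [mul_assoc]
      _ = E := by rw [← mul_assoc, ← mul_assoc a (star a) a, hpi1]
  obtain ⟨hsquare, hsmall⟩ := mul_sq_eq_and_tendsto_of_mul_eq hx hlim hqE hEq
  refine ⟨hsquare, ?_, hsmall⟩
  rwa [← mul_assoc, hqE]

end NormedRing

theorem grcep_iff_grg_partial_isometry_general
    {A : Type*} [NormedRing A] [StarRing A]
    (a : A) (hpi1 : a * star a * a = a) (hpi2 : star a * a * star a = star a) :
    (∃ x : A, IsGRCEPInv a x) ↔ (∃ x : A, IsGRGInv a x) :=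
  ⟨fun ⟨_, h⟩ => ⟨_, h.isGRGInv⟩, fun ⟨_, h⟩ => ⟨_, h.isGRCEPInv_of_partialIsometry hpi1 hpi2⟩⟩

/-- If `a` is a partial isometry (its Moore–Penrose inverse is `a*`,
i.e. a a* a = a and a* a a* = a*), then `a` has a generalized right core-EP inverse
iff `a` is generalized right group invertible. -/
theorem grcep_iff_grg_partial_isometry
    {A : Type*} [NormedRing A] [StarRing A] [NormedAlgebra ℂ A] [CompleteSpace A]
    (hproper : ∀ x : A, star x * x = 0 → x = 0)
    (a : A) (hpi1 : a * star a * a = a) (hpi2 : star a * a * star a = star a) :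
    (∃ x : A, IsGRCEPInv a x) ↔ (∃ x : A, IsGRGInv a x) :=
  grcep_iff_grg_partial_isometry_general a hpi1 hpi2
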